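/- arXiv:1701.08537 — 5 statements merged into one kernel-verified Lean document; each statement's English description precedes it below -/
import Mathlib

section
/- Let Γ be a connected simple graph, let u and v be twin vertices of Γ, and let L_D be a locating-dominating set of Γ. Then u ∈ L_D or v ∈ L_D. Moreover, if u ∈ L_D and v ∉ L_D, then (L_D \ {u}) ∪ {v} is also a locating-dominating set of Γ. -/
/-- A set `L` is a locating-dominating set of `G` if for every two distinct
vertices `u, v ∉ L` we have `∅ ≠ N(u) ∩ L ≠ N(v) ∩ L ≠ ∅`. -/
def IsLocDom {α : Type*} (G : SimpleGraph α) (L : Set α) : Prop :=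
  ∀ ⦃u v : α⦄, u ∉ L → v ∉ L → u ≠ v →
    G.neighborSet u ∩ L ≠ ∅ ∧
    G.neighborSet u ∩ L ≠ G.neighborSet v ∩ L ∧
    G.neighborSet v ∩ L ≠ ∅

/-- A set `C` is an identifying code of `G` if `N[u] ∩ C ≠ N[v] ∩ C`
for all distinct vertices `u, v`. -/
def IsIdCode {α : Type*} (G : SimpleGraph α) (C : Set α) : Prop :=
  ∀ ⦃u v : α⦄, u ≠ v →
    insert u (G.neighborSet u) ∩ C ≠ insert v (G.neighborSet v) ∩ C

/-- The location-domination number: minimum cardinality of a locating-dominating set. -/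
noncomputable def locDomNum {α : Type*} (G : SimpleGraph α) : ℕ :=
  sInf {k : ℕ | ∃ L : Set α, IsLocDom G L ∧ L.ncard = k}

/-- The identifying number: minimum cardinality of an identifying code. -/
noncomputable def idNum {α : Type*} (G : SimpleGraph α) : ℕ :=
  sInf {k : ℕ | ∃ C : Set α, IsIdCode G C ∧ C.ncard = k}

/-- If `u, v` are twin vertices of a connected graph `Γ` and `L_D` is a
locating-dominating set of `Γ`, then `u ∈ L_D` or `v ∈ L_D`; moreover if
`u ∈ L_D` and `v ∉ L_D`, then `(L_D \ {u}) ∪ {v}` is a locating-dominating set. -/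
theorem stmt_0 {α : Type*} (G : SimpleGraph α) (hG : G.Connected) (u v : α) (huv : u ≠ v)
    (htwin : G.neighborSet u = G.neighborSet v ∨
      insert u (G.neighborSet u) = insert v (G.neighborSet v))
    (L : Set α) (hL : IsLocDom G L) :
    (u ∈ L ∨ v ∈ L) ∧
      (u ∈ L → v ∉ L → IsLocDom G ((L \ {u}) ∪ {v})) := by
  classical
  -- key twin property: vertices other than u,v see u and v the same way
  have key : ∀ w, w ≠ u → w ≠ v → (G.Adj u w ↔ G.Adj v w) := by
    intro w hwu hwv
    rcases htwin with h | h
    · constructor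
      · intro ha
        have : w ∈ G.neighborSet u := ha
        rw [h] at this; exact this
      · intro ha
        have : w ∈ G.neighborSet v := ha
        rw [← h] at this; exact this
    · constructor
      · intro ha
        have hw : w ∈ insert u (G.neighborSet u) := Set.mem_insert_of_mem _ ha
        rw [h] at hw
        rcases hw with h' | h'
        · exact absurd h' hwv
        · exact h'
      · intro ha
        have hw : w ∈ insert v (G.neighborSet v) := Set.mem_insert_of_mem _ ha
        rw [← h] at hw
        rcases hw with h' | h'
        · exact absurd h' hwu
        · exact h'
  set e : Equiv.Perm α := Equiv.swap u v with he
  have hee : ∀ a, e (e a) = a := fun a => Equiv.swap_apply_self u v a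
  -- e is a graph automorphism
  have hadj : ∀ a b, G.Adj a b → G.Adj (e a) (e b) := by
    intro a b hab
    by_cases hau : a = u
    · rw [hau] at hab ⊢
      by_cases hbv : b = v
      · rw [hbv] at hab ⊢
        simpa [he, Equiv.swap_apply_left, Equiv.swap_apply_right] using hab.symm
      · have hbu : b ≠ u := fun h => by rw [h] at hab; exact G.irrefl hab
        have : e b = b := Equiv.swap_apply_of_ne_of_ne hbu hbv
        rw [this]
        simpa [he, Equiv.swap_apply_left] using (key b hbu hbv).mp hab
    · by_cases hav : a = v
      · rw [hav] at hab ⊢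
        by_cases hbu : b = u
        · rw [hbu] at hab ⊢
          simpa [he, Equiv.swap_apply_left, Equiv.swap_apply_right] using hab.symm
        · have hbv : b ≠ v := fun h => by rw [h] at hab; exact G.irrefl hab
          have : e b = b := Equiv.swap_apply_of_ne_of_ne hbu hbv
          rw [this]
          simpa [he, Equiv.swap_apply_right] using (key b hbu hbv).mpr hab
      · have hea : e a = a := Equiv.swap_apply_of_ne_of_ne hau hav
        rw [hea]
        by_cases hbu : b = u
        · rw [hbu] at hab ⊢
          simpa [he, Equiv.swap_apply_left] using
            ((key a hau hav).mp hab.symm).symm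
        · by_cases hbv : b = v
          · rw [hbv] at hab ⊢
            simpa [he, Equiv.swap_apply_right] using
              ((key a hau hav).mpr hab.symm).symm
          · rw [Equiv.swap_apply_of_ne_of_ne hbu hbv]; exact hab
  have hadj_iff : ∀ a b, G.Adj (e a) (e b) ↔ G.Adj a b := by
    intro a b
    refine ⟨fun h => ?_, hadj a b⟩
    have := hadj _ _ h
    rwa [hee, hee] at this
  -- neighborhoods commute with e
  have hnb : ∀ a, G.neighborSet a = e '' G.neighborSet (e a) := by
    intro a
    ext w
    simp only [Set.mem_image, SimpleGraph.mem_neighborSet]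
    constructor
    · intro hw
      exact ⟨e w, by rw [show G.Adj (e a) (e w) ↔ G.Adj a w from hadj_iff a w]; exact hw,
        hee w⟩
    · rintro ⟨x, hx, rfl⟩
      have := hadj _ _ hx
      rwa [hee] at this
  -- Part 1
  have part1 : u ∈ L ∨ v ∈ L := by
    by_contra hcon
    push_neg at hcon
    obtain ⟨hu, hv⟩ := hcon
    obtain ⟨-, hne, -⟩ := hL hu hv huv
    apply hne
    ext x
    simp only [Set.mem_inter_iff, SimpleGraph.mem_neighborSet]
    constructor
    · rintro ⟨hx, hxL⟩
      refine ⟨(key x (fun h => hu (h ▸ hxL)) (fun h => hv (h ▸ hxL))).mp hx, hxL⟩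
    · rintro ⟨hx, hxL⟩
      refine ⟨(key x (fun h => hu (h ▸ hxL)) (fun h => hv (h ▸ hxL))).mpr hx, hxL⟩
  refine ⟨part1, ?_⟩
  intro hu hv
  -- (L \ {u}) ∪ {v} = e '' L
  have himg : (L \ {u}) ∪ {v} = e '' L := by
    ext x
    have hx' : x ∈ e '' L ↔ e x ∈ L := by
      constructor
      · rintro ⟨y, hy, rfl⟩; rwa [hee]
      · intro h; exact ⟨e x, h, hee x⟩
    rw [hx']
    by_cases hxu : x = u
    · rw [hxu]
      simp only [he, Equiv.swap_apply_left]
      simp [hv, huv, Set.mem_diff]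
    · by_cases hxv : x = v
      · rw [hxv]
        simp only [he, Equiv.swap_apply_right]
        simp [hu]
      · rw [Equiv.swap_apply_of_ne_of_ne hxu hxv]
        simp [Set.mem_diff, hxu, hxv]
  rw [himg]
  -- transfer locating-domination along e
  intro a b ha hb hab
  have hmem : ∀ x, x ∈ e '' L ↔ e x ∈ L := by
    intro x
    constructor
    · rintro ⟨y, hy, rfl⟩; rwa [hee]
    · intro h; exact ⟨e x, h, hee x⟩
  have ha' : e a ∉ L := fun h => ha ((hmem a).mpr h)
  have hb' : e b ∉ L := fun h => hb ((hmem b).mpr h)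
  have hab' : e a ≠ e b := fun h => hab (e.injective h)
  obtain ⟨h1, h2, h3⟩ := hL ha' hb' hab'
  have hia : G.neighborSet a ∩ (e '' L) = e '' (G.neighborSet (e a) ∩ L) := by
    rw [hnb a, Set.image_inter e.injective]
  have hib : G.neighborSet b ∩ (e '' L) = e '' (G.neighborSet (e b) ∩ L) := by
    rw [hnb b, Set.image_inter e.injective]
  refine ⟨?_, ?_, ?_⟩
  · rw [hia]
    intro h
    exact h1 (by simpa [Set.image_eq_empty] using h)
  · rw [hia, hib]
    intro h
    exact h2 (Set.image_injective.mpr e.injective h)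
  · rw [hib]
    intro h
    exact h3 (by simpa [Set.image_eq_empty] using h)
end

section
/- Let T be a twin-set of cardinality m ≥ 2 in a connected simple graph Γ. Then every locating-dominating set L_D of Γ contains at least m−1 vertices of T. -/
/-- If `T` is a twin-set of cardinality `m ≥ 2` in a connected graph `Γ`, then every
locating-dominating set of `Γ` contains at least `m - 1` vertices of `T`. -/
theorem stmt_1 {α : Type*} (G : SimpleGraph α) (hG : G.Connected) (T : Set α) (m : ℕ)
    (hm : 2 ≤ m) (hT : T.ncard = m)
    (htwin : ∀ u ∈ T, ∀ v ∈ T, G.neighborSet u = G.neighborSet v ∨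
      insert u (G.neighborSet u) = insert v (G.neighborSet v))
    (L : Set α) (hL : IsLocDom G L) :
    m - 1 ≤ (T ∩ L).ncard := by
  have hfin : T.Finite := by
    apply Set.finite_of_ncard_ne_zero; omega
  have hsub : (T \ L).Subsingleton := by
    intro u hu v hv
    by_contra hne
    have h := hL hu.2 hv.2 hne
    apply h.2.1
    rcases htwin u hu.1 v hv.1 with h' | h'
    · rw [h']
    · have e1 : insert u (G.neighborSet u) ∩ L = G.neighborSet u ∩ L :=
        Set.insert_inter_of_notMem hu.2
      have e2 : insert v (G.neighborSet v) ∩ L = G.neighborSet v ∩ L :=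
        Set.insert_inter_of_notMem hv.2
      rw [← e1, ← e2, h']
  have h1 : (T \ L).ncard ≤ 1 := (Set.ncard_le_one (hfin.diff (t := L))).mpr fun _ ha _ hb => hsub ha hb
  have h2 : (T ∩ L).ncard + (T \ L).ncard = T.ncard :=
    Set.ncard_inter_add_ncard_diff_eq_ncard T L hfin
  omega
end

section
/- Let V be an n-dimensional vector space over the field F_2 of 2 elements with fixed basis {b_1,...,b_n}, and let v ∈ T_s for some 1 ≤ s ≤ n. Then for every 1 ≤ r ≤ n: |N(v) ∩ T_r| = C(n,r) − C(n−s,r) − 1 if r ≤ n−s and r = s; |N(v) ∩ T_r| = C(n,r) − C(n−s,r) if r ≤ n−s and r ≠ s; |N(v) ∩ T_r| = C(n,r) − 1 if n−s < r ≤ n and r = s; and |N(v) ∩ T_r| = C(n,r) if n−s < r ≤ n and r ≠ s. -/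
/-- The non-zero component graph of a vector space `W` with respect to a fixed
basis `b`: vertices are the non-zero vectors, and two distinct vertices are
adjacent iff some basis vector has non-zero coefficient in both of their
representations. -/
def nzcGraph {F W : Type*} [Field F] [AddCommGroup W] [Module F W] {n : ℕ}
    (b : Module.Basis (Fin n) F W) : SimpleGraph {w : W // w ≠ 0} where
  Adj u v := u ≠ v ∧ ∃ i, b.repr u.1 i ≠ 0 ∧ b.repr v.1 i ≠ 0
  symm := ⟨by
    rintro u v ⟨h, i, hu, hv⟩
    exact ⟨h.symm, i, hv, hu⟩⟩
  loopless := ⟨by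
    rintro u ⟨h, -⟩
    exact h rfl⟩

/-- `Tset b i` is the class `Tᵢ` of non-zero vectors having exactly `i`
non-zero coefficients in their representation w.r.t. the basis `b`. -/
def Tset {F W : Type*} [Field F] [AddCommGroup W] [Module F W] {n : ℕ}
    (b : Module.Basis (Fin n) F W) (i : ℕ) : Set {w : W // w ≠ 0} :=
  {v | (b.repr v.1).support.card = i}

/-- Lemma 2.2 (q = 2): the cardinality of `N(v) ∩ T_r` for `v ∈ T_s`. -/
theorem stmt_2 {F W : Type*} [Field F] [Fintype F] (hq : Fintype.card F = 2)
    [AddCommGroup W] [Module F W] {n : ℕ} (b : Module.Basis (Fin n) F W)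
    (s : ℕ) (hs1 : 1 ≤ s) (hsn : s ≤ n) (v : {w : W // w ≠ 0}) (hv : v ∈ Tset b s)
    (r : ℕ) (hr1 : 1 ≤ r) (hrn : r ≤ n) :
    (r ≤ n - s → r = s →
      ((nzcGraph b).neighborSet v ∩ Tset b r).ncard = n.choose r - (n - s).choose r - 1) ∧
    (r ≤ n - s → r ≠ s →
      ((nzcGraph b).neighborSet v ∩ Tset b r).ncard = n.choose r - (n - s).choose r) ∧
    (n - s < r → r = s →
      ((nzcGraph b).neighborSet v ∩ Tset b r).ncard = n.choose r - 1) ∧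
    (n - s < r → r ≠ s →
      ((nzcGraph b).neighborSet v ∩ Tset b r).ncard = n.choose r) := by
  classical
  -- every nonzero element of F is 1
  have hone : ∀ x : F, x ≠ 0 → x = 1 := by
    intro x hx
    have h1 : Fintype.card Fˣ = 1 := by rw [Fintype.card_units, hq]
    have : Subsingleton Fˣ := Fintype.card_le_one_iff_subsingleton.mp h1.le
    have he : (Units.mk0 x hx) = 1 := Subsingleton.elim _ _
    calc x = ((Units.mk0 x hx : Fˣ) : F) := rfl
    _ = ((1 : Fˣ) : F) := by rw [he]
    _ = 1 := rfl
  -- support determines the vector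
  have hsupp_inj : ∀ w1 w2 : W,
      (b.repr w1).support = (b.repr w2).support → w1 = w2 := by
    intro w1 w2 h
    have : b.repr w1 = b.repr w2 := by
      ext i
      by_cases hi : i ∈ (b.repr w1).support
      · have h1 := Finsupp.mem_support_iff.mp hi
        have h2 := Finsupp.mem_support_iff.mp (h ▸ hi)
        rw [hone _ h1, hone _ h2]
      · have h1 := Finsupp.notMem_support_iff.mp hi
        have hi2 : i ∉ (b.repr w2).support := by rwa [← h]
        have h2 := Finsupp.notMem_support_iff.mp hi2
        rw [h1, h2]
    exact b.repr.injective this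
  -- support of a sum of basis vectors
  have hsupp_sum : ∀ T : Finset (Fin n), (b.repr (∑ i ∈ T, b i)).support = T := by
    intro T
    have hsum : b.repr (∑ i ∈ T, b i) = ∑ i ∈ T, Finsupp.single i (1:F) := by
      rw [map_sum]; simp [Module.Basis.repr_self]
    rw [hsum]
    ext j
    simp [Finsupp.mem_support_iff, Finsupp.finset_sum_apply, Finsupp.single_apply,
      Finset.sum_ite_eq]
  set S := (b.repr v.1).support with hSdef
  have hS : S.card = s := hv
  have hSne : S.Nonempty := by
    rw [← Finset.card_pos, hS]; exact hs1
  set tgt : Finset (Finset (Fin n)) :=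
    (Finset.univ.powersetCard r).filter (fun T => (T ∩ S).Nonempty ∧ T ≠ S) with htgtdef
  -- counting the target finset
  have hmemP : ∀ T : Finset (Fin n), T ∈ Finset.univ.powersetCard r ↔ T.card = r := by
    intro T; simp [Finset.mem_powersetCard]
  have hcard1 : ((Finset.univ.powersetCard r).filter
      (fun T => (T ∩ S).Nonempty)).card = n.choose r - (n - s).choose r := by
    have hneg : (Finset.univ.powersetCard r).filter
        (fun T => ¬(T ∩ S).Nonempty) = Sᶜ.powersetCard r := by
      ext T
      simp only [Finset.mem_filter, hmemP, Finset.mem_powersetCard,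
        Finset.not_nonempty_iff_eq_empty]
      constructor
      · rintro ⟨hc, he⟩
        refine ⟨fun x hx => Finset.mem_compl.mpr ?_, hc⟩
        intro hxS
        exact absurd (Finset.eq_empty_iff_forall_notMem.mp he x
          (Finset.mem_inter.mpr ⟨hx, hxS⟩)) (fun h => h)
      · rintro ⟨hsub, hc⟩
        refine ⟨hc, Finset.eq_empty_iff_forall_notMem.mpr ?_⟩
        intro x hx
        rcases Finset.mem_inter.mp hx with ⟨hxT, hxS⟩
        exact Finset.mem_compl.mp (hsub hxT) hxS
    have htotal : (Finset.univ.powersetCard r : Finset (Finset (Fin n))).card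
        = n.choose r := by
      rw [Finset.card_powersetCard, Finset.card_univ, Fintype.card_fin]
    have hcompl : (Sᶜ.powersetCard r).card = (n - s).choose r := by
      rw [Finset.card_powersetCard, Finset.card_compl, hS, Fintype.card_fin]
    have hsplit := Finset.card_filter_add_card_filter_not
      (s := Finset.univ.powersetCard r) (p := fun T => (T ∩ S).Nonempty)
    rw [hneg, hcompl, htotal] at hsplit
    omega
  have htgt_card : tgt.card = n.choose r - (n - s).choose r
      - (if r = s then 1 else 0) := by
    have heq : tgt = ((Finset.univ.powersetCard r).filter
        (fun T => (T ∩ S).Nonempty)).erase S := by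
      rw [htgtdef, ← Finset.filter_ne', Finset.filter_filter]
    rw [heq, Finset.card_erase_eq_ite, hcard1]
    by_cases hrs : r = s
    · have hmem : S ∈ (Finset.univ.powersetCard r).filter
          (fun T => (T ∩ S).Nonempty) := by
        rw [Finset.mem_filter, hmemP]
        refine ⟨by rw [hS, hrs], ?_⟩
        rwa [Finset.inter_self]
      simp only [if_pos hmem, if_pos hrs]
    · have hmem : S ∉ (Finset.univ.powersetCard r).filter
          (fun T => (T ∩ S).Nonempty) := by
        rw [Finset.mem_filter, hmemP, hS]
        intro h
        exact hrs h.1.symm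
      simp only [if_neg hmem, if_neg hrs]
      omega
  -- bijection between the neighbour set and tgt
  set A := (nzcGraph b).neighborSet v ∩ Tset b r with hAdef
  set f : {w : W // w ≠ 0} → Finset (Fin n) := fun w => (b.repr w.1).support with hfdef
  have hmemA : ∀ w : {w : W // w ≠ 0}, w ∈ A ↔
      (v ≠ w ∧ ∃ i, b.repr v.1 i ≠ 0 ∧ b.repr w.1 i ≠ 0)
        ∧ (b.repr w.1).support.card = r := by
    intro w
    rw [hAdef, Set.mem_inter_iff, SimpleGraph.mem_neighborSet]
    exact Iff.rfl
  have himg : f '' A = ↑tgt := by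
    ext T
    simp only [Set.mem_image, Finset.coe_filter, Set.mem_setOf_eq, htgtdef,
      Finset.mem_coe, Finset.mem_filter, hmemP]
    constructor
    · rintro ⟨w, hw, rfl⟩
      rcases (hmemA w).mp hw with ⟨⟨hne, i, hvi, hwi⟩, hcard⟩
      refine ⟨hcard, ⟨i, Finset.mem_inter.mpr
        ⟨Finsupp.mem_support_iff.mpr hwi, Finsupp.mem_support_iff.mpr hvi⟩⟩, ?_⟩
      intro hTS
      exact hne (Subtype.ext (hsupp_inj _ _ (hTS.trans hSdef))).symm
    · rintro ⟨hc, ⟨i, hi⟩, hTS⟩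
      rcases Finset.mem_inter.mp hi with ⟨hiT, hiS⟩
      have hsupp := hsupp_sum T
      have hw0 : (∑ i ∈ T, b i) ≠ 0 := by
        intro h0
        rw [h0] at hsupp
        simp only [map_zero, Finsupp.support_zero] at hsupp
        rw [← hsupp] at hiT
        exact absurd hiT (Finset.notMem_empty i)
      refine ⟨⟨_, hw0⟩, ?_, hsupp⟩
      refine (hmemA _).mpr ⟨⟨?_, i, ?_, ?_⟩, by rw [hsupp]; exact hc⟩
      · intro hvw
        apply hTS
        have h2 : S = (b.repr (∑ i ∈ T, b i)).support :=
          congrArg (fun w : {w : W // w ≠ 0} => (b.repr w.1).support) hvw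
        rw [hsupp] at h2
        exact h2.symm
      · exact Finsupp.mem_support_iff.mp hiS
      · exact Finsupp.mem_support_iff.mp (by rw [hsupp]; exact hiT)
  have hinj : Set.InjOn f A := by
    intro w1 _ w2 _ h
    exact Subtype.ext (hsupp_inj _ _ h)
  have key : A.ncard = tgt.card := by
    rw [← Set.ncard_coe_finset, ← himg, Set.ncard_image_of_injOn hinj]
  have key2 : A.ncard = n.choose r - (n - s).choose r - (if r = s then 1 else 0) := by
    rw [key, htgt_card]
  refine ⟨?_, ?_, ?_, ?_⟩
  · intro _ hrs; rw [key2, if_pos hrs]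
  · intro _ hrs; rw [key2, if_neg hrs]; omega
  · intro hlt hrs
    rw [key2, if_pos hrs, Nat.choose_eq_zero_of_lt hlt]
    omega
  · intro hlt hrs
    rw [key2, if_neg hrs, Nat.choose_eq_zero_of_lt hlt]; omega
end

section
/- Let V be an n-dimensional vector space over the field F_2 of 2 elements with n ≥ 3 and fixed basis {b_1,...,b_n}. Let L_D be a locating-dominating set of Γ(V) with |L_D ∩ T_1| = n−1. Then |L_D ∩ (T_n ∪ T_{n−1})| ≥ 1. -/
/-!
Some basis vector `b j` lies outside `L`, since only `n - 1` vectors of `T₁` are in `L`.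
Let `u = ∑ᵢ bᵢ ∈ Tₙ` and `v = ∑_{i ≠ j} bᵢ ∈ T_{n-1}`. Every vertex meets the full support
of `u`, and every vertex except the multiples of `b j` meets the support of `v`; over `F₂` the
only such multiple is `b j ∉ L`. So if `L` avoided `Tₙ ∪ T_{n-1}`, the vertices `u, v ∉ L`
would have the same trace `N(u) ∩ L = N(v) ∩ L`.
-/

open Finset

theorem eq_one_of_ne_zero_of_card_eq_two {G₀ : Type*} [GroupWithZero G₀] [Fintype G₀]
    (hq : Fintype.card G₀ = 2) {x : G₀} (hx : x ≠ 0) : x = 1 := by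
  classical
  have : Subsingleton G₀ˣ :=
    Fintype.card_le_one_iff_subsingleton.mp (by rw [Fintype.card_units, hq])
  simpa using congrArg Units.val (Subsingleton.elim (Units.mk0 x hx) 1)

namespace nzcGraph

variable {F W : Type*} [Field F] [AddCommGroup W] [Module F W] {n : ℕ}
  (b : Module.Basis (Fin n) F W)

theorem adj_iff {u w : {w : W // w ≠ 0}} :
    (nzcGraph b).Adj u w ↔
      u ≠ w ∧ ¬Disjoint (b.repr u.1).support (b.repr w.1).support := by
  simp only [Finset.not_disjoint_iff, Finsupp.mem_support_iff]
  rfl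

theorem repr_sum_basis_apply (s : Finset (Fin n)) (i : Fin n) :
    b.repr (∑ k ∈ s, b k) i = if i ∈ s then 1 else 0 := by
  simp [map_sum, Finsupp.finsetSum_apply, Finsupp.single_apply]

theorem support_repr_sum_basis (s : Finset (Fin n)) :
    (b.repr (∑ k ∈ s, b k)).support = s := by
  ext i
  rw [Finsupp.mem_support_iff, repr_sum_basis_apply]
  simp

noncomputable def sumVertex (s : Finset (Fin n)) (hs : s.Nonempty) : {w : W // w ≠ 0} :=
  ⟨∑ k ∈ s, b k, fun h => by
    have hsupp := support_repr_sum_basis b s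
    rw [h, map_zero, Finsupp.support_zero] at hsupp
    exact hs.ne_empty hsupp.symm⟩

@[simp]
theorem support_sumVertex (s : Finset (Fin n)) (hs : s.Nonempty) :
    (b.repr (sumVertex b s hs).1).support = s :=
  support_repr_sum_basis b s

theorem support_nonempty (w : {w : W // w ≠ 0}) : (b.repr w.1).support.Nonempty := by
  rw [Finsupp.support_nonempty_iff, Ne, b.repr.map_eq_zero_iff]
  exact w.2

theorem sumVertex_mem_Tset (s : Finset (Fin n)) (hs : s.Nonempty) :
    sumVertex b s hs ∈ Tset b s.card := by
  simp [Tset]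

theorem eq_of_sumVertex_eq {s t : Finset (Fin n)} (hs : s.Nonempty) (ht : t.Nonempty)
    (h : sumVertex b s hs = sumVertex b t ht) : s = t := by
  rw [← support_sumVertex b s hs, h, support_sumVertex]

theorem eq_sumVertex_of_support_eq (hF : ∀ x : F, x ≠ 0 → x = 1) (w : {w : W // w ≠ 0})
    {s : Finset (Fin n)} (hs : s.Nonempty) (hw : (b.repr w.1).support = s) :
    w = sumVertex b s hs := by
  subst hw
  refine Subtype.ext (b.repr.injective (Finsupp.ext fun i => ?_))
  rw [sumVertex, repr_sum_basis_apply]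
  split_ifs with hi
  · exact hF _ (Finsupp.mem_support_iff.mp hi)
  · exact Finsupp.notMem_support_iff.mp hi

theorem eq_sumVertex_singleton_of_disjoint (hF : ∀ x : F, x ≠ 0 → x = 1)
    {w : {w : W // w ≠ 0}} {j : Fin n} (h : Disjoint (univ.erase j) (b.repr w.1).support) :
    w = sumVertex b {j} (singleton_nonempty j) := by
  refine eq_sumVertex_of_support_eq b hF w _ ((support_nonempty b w).subset_singleton_iff.mp ?_)
  intro i hi
  by_contra hij
  exact disjoint_left.mp h (mem_erase.mpr ⟨notMem_singleton.mp hij, mem_univ i⟩) hi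

theorem exists_sumVertex_singleton_notMem [Finite W] {L : Set {w : W // w ≠ 0}}
    (hcard : (L ∩ Tset b 1).ncard < n) :
    ∃ j, sumVertex b {j} (singleton_nonempty j) ∉ L := by
  by_contra! hall
  have hrange : Set.range (fun j => sumVertex b {j} (singleton_nonempty j)) ⊆ L ∩ Tset b 1 := by
    rintro _ ⟨j, rfl⟩
    exact ⟨hall j, sumVertex_mem_Tset b {j} _⟩
  have hinj : Function.Injective (fun j => sumVertex b {j} (singleton_nonempty j)) :=
    fun j k h => singleton_injective (eq_of_sumVertex_eq b _ _ h)
  have := Set.ncard_le_ncard hrange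
  rw [Set.ncard_range_of_injective hinj, Nat.card_eq_fintype_card, Fintype.card_fin] at this
  omega

theorem neighborSet_inter_eq {L : Set {w : W // w ≠ 0}} {u v : {w : W // w ≠ 0}}
    (hu : u ∉ L) (hv : v ∉ L)
    (h : ∀ w ∈ L, ¬Disjoint (b.repr u.1).support (b.repr w.1).support ↔
      ¬Disjoint (b.repr v.1).support (b.repr w.1).support) :
    (nzcGraph b).neighborSet u ∩ L = (nzcGraph b).neighborSet v ∩ L := by
  ext w
  simp only [Set.mem_inter_iff, SimpleGraph.mem_neighborSet, adj_iff]
  constructor <;> rintro ⟨⟨-, hadj⟩, hw⟩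
  · exact ⟨⟨fun h => hv (h ▸ hw), (h w hw).mp hadj⟩, hw⟩
  · exact ⟨⟨fun h => hu (h ▸ hw), (h w hw).mpr hadj⟩, hw⟩

end nzcGraph

open nzcGraph

/-- For `n ≥ 3` over `F₂`: if `L_D` is a locating-dominating set of `Γ(V)` with
`|L_D ∩ T₁| = n - 1`, then `|L_D ∩ (T_n ∪ T_{n-1})| ≥ 1`. -/
theorem stmt_7 {F W : Type*} [Field F] [Fintype F] (hq : Fintype.card F = 2)
    [AddCommGroup W] [Module F W] {n : ℕ} (hn : 3 ≤ n) (b : Module.Basis (Fin n) F W)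
    (L : Set {w : W // w ≠ 0}) (hL : IsLocDom (nzcGraph b) L)
    (hs : (L ∩ Tset b 1).ncard = n - 1) :
    1 ≤ (L ∩ (Tset b n ∪ Tset b (n - 1))).ncard := by
  have : Module.Finite F W := .of_basis b
  have : Finite W := Module.finite_of_finite F
  have hF (x : F) (hx : x ≠ 0) : x = 1 := eq_one_of_ne_zero_of_card_eq_two hq hx
  obtain ⟨j, hj⟩ := exists_sumVertex_singleton_notMem b (L := L) (by omega)
  have hcard : (univ.erase j).card = n - 1 := by simp [card_erase_of_mem]
  have hne : (univ.erase j).Nonempty := card_pos.mp (by omega)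
  let u := sumVertex b univ (univ_nonempty_iff.mpr ⟨j⟩)
  let v := sumVertex b (univ.erase j) hne
  rw [Nat.one_le_iff_ne_zero, Ne, Set.ncard_eq_zero, ← Ne, ← Set.nonempty_iff_ne_empty]
  by_contra hempty
  have hu : u ∉ L := fun hu =>
    hempty ⟨u, hu, Or.inl (by simpa using sumVertex_mem_Tset b univ _)⟩
  have hv : v ∉ L := fun hv => hempty ⟨v, hv, Or.inr (hcard ▸ sumVertex_mem_Tset b _ hne)⟩
  have huv : u ≠ v := fun h =>
    notMem_erase j univ (eq_of_sumVertex_eq b _ _ h ▸ mem_univ j)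
  refine (hL hu hv huv).2.1 (neighborSet_inter_eq b hu hv fun w hw => ?_)
  simp only [u, v, support_sumVertex]
  obtain ⟨i, hi⟩ := support_nonempty b w
  exact iff_of_true (not_disjoint_iff.mpr ⟨i, mem_univ i, hi⟩) fun h =>
    hj (eq_sumVertex_singleton_of_disjoint b hF h ▸ hw)
end

section
/- Let V be an n-dimensional vector space over the finite field F_q with q ≥ 3 elements. Then the location-domination number of Γ(V) equals Σ_{i=1}^{n} C(n,i)·((q−1)^i − 1). -/
section Helpers

variable {F W : Type*} [Field F] [AddCommGroup W] [Module F W] {n : ℕ}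

lemma nzc_adj_iff (b : Module.Basis (Fin n) F W) (u v : {w : W // w ≠ 0}) :
    (nzcGraph b).Adj u v ↔ u ≠ v ∧ ∃ i, b.repr u.1 i ≠ 0 ∧ b.repr v.1 i ≠ 0 :=
  Iff.rfl

lemma nzc_repr_sum_apply (b : Module.Basis (Fin n) F W) (S : Finset (Fin n)) (j : Fin n) :
    b.repr (∑ i ∈ S, b i) j = if j ∈ S then 1 else 0 := by
  classical
  rw [map_sum, Finsupp.finset_sum_apply]
  simp only [Module.Basis.repr_self, Finsupp.single_apply]
  exact Finset.sum_ite_eq' S j fun _ => 1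

lemma nzc_support_sum (b : Module.Basis (Fin n) F W) (S : Finset (Fin n)) :
    (b.repr (∑ i ∈ S, b i)).support = S := by
  ext j
  rw [Finsupp.mem_support_iff, nzc_repr_sum_apply]
  by_cases h : j ∈ S <;> simp [h]

lemma nzc_sum_ne_zero (b : Module.Basis (Fin n) F W) {S : Finset (Fin n)} (hS : S.Nonempty) :
    (∑ i ∈ S, b i) ≠ 0 := by
  obtain ⟨k, hk⟩ := hS
  intro h
  have h2 := nzc_repr_sum_apply b S k
  rw [h] at h2
  simp [hk] at h2

lemma nzc_supp_nonempty (b : Module.Basis (Fin n) F W) (v : {w : W // w ≠ 0}) :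
    (b.repr v.1).support.Nonempty := by
  rw [Finsupp.support_nonempty_iff]
  intro h
  exact v.2 (by simpa using congrArg b.repr.symm h)

lemma nzc_repr_smul (b : Module.Basis (Fin n) F W) (c : F) (k : Fin n) :
    b.repr (c • b k) = Finsupp.single k c := by
  rw [map_smul, b.repr_self, Finsupp.smul_single, smul_eq_mul, mul_one]

lemma nzc_cardNe (n : ℕ) :
    Nat.card {S : Finset (Fin n) // S.Nonempty} = 2 ^ n - 1 := by
  classical
  have e : {S : Finset (Fin n) // S.Nonempty} ≃ {S : Finset (Fin n) // ¬(S = ∅)} :=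
    Equiv.subtypeEquivRight fun S => by simp [Finset.nonempty_iff_ne_empty]
  rw [Nat.card_congr e, Nat.card_eq_fintype_card, Fintype.card_subtype_compl,
    Fintype.card_subtype_eq, Fintype.card_finset, Fintype.card_fin]

end Helpers

/-- For `q ≥ 3`, the location-domination number of `Γ(V)` equals
`∑_{i=1}^{n} C(n,i) ((q-1)^i - 1)`. -/
theorem stmt_12 {F W : Type*} [Field F] [Fintype F] (hq : 3 ≤ Fintype.card F)
    [AddCommGroup W] [Module F W] {n : ℕ} (b : Module.Basis (Fin n) F W) :
    locDomNum (nzcGraph b) =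
      ∑ i ∈ Finset.Icc 1 n, n.choose i * ((Fintype.card F - 1) ^ i - 1) := by
  classical
  set q := Fintype.card F with hqdef
  haveI : Module.Finite F W := Module.Finite.of_basis b
  haveI : Finite W := Module.finite_of_finite F
  -- cardinalities
  have cardW : Nat.card W = q ^ n := by
    rw [Nat.card_congr b.equivFun.toEquiv, Nat.card_fun]
    simp [Nat.card_eq_fintype_card, hqdef]
  have cardV : Nat.card {w : W // w ≠ 0} = q ^ n - 1 := by
    have h1 : Nat.card {w : W // w ≠ 0} = Set.ncard (({0} : Set W)ᶜ) := by
      rw [← Nat.card_coe_set_eq]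
      exact Nat.card_congr (Equiv.subtypeEquivRight (by simp))
    have h2 := Set.ncard_add_ncard_compl ({0} : Set W)
    rw [Set.ncard_singleton, cardW] at h2
    omega
  have hq2 : (2 : ℕ) ^ n ≤ q ^ n := Nat.pow_le_pow_left (by omega) n
  have h2pos : (1 : ℕ) ≤ 2 ^ n := Nat.one_le_two_pow
  -- a scalar c ≠ 0, 1
  obtain ⟨c, hc0, hc1⟩ : ∃ c : F, c ≠ 0 ∧ c ≠ 1 := by
    by_contra h
    push_neg at h
    have hsub : (Finset.univ : Finset F) ⊆ {0, 1} := by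
      intro x _
      simp only [Finset.mem_insert, Finset.mem_singleton]
      rcases eq_or_ne x 0 with h0 | h0
      · exact Or.inl h0
      · exact Or.inr (h x h0)
    have hcard := Finset.card_le_card hsub
    have h2 : ({0, 1} : Finset F).card ≤ 2 :=
      (Finset.card_insert_le _ _).trans (by simp)
    rw [Finset.card_univ] at hcard
    omega
  -- the canonical set K and its complement
  set K : Set {w : W // w ≠ 0} :=
    {v | v.1 = ∑ i ∈ (b.repr v.1).support, b i} with hKdef
  -- the distinguishing vertices
  set wv : Fin n → {w : W // w ≠ 0} :=
    fun k => ⟨c • b k, smul_ne_zero hc0 (b.ne_zero k)⟩ with hwvdef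
  have hwL : ∀ k, wv k ∈ Kᶜ := by
    intro k
    simp only [Set.mem_compl_iff, hKdef, Set.mem_setOf_eq, hwvdef]
    rw [nzc_repr_smul, Finsupp.support_single_ne_zero k hc0, Finset.sum_singleton]
    intro h
    have h2 := congrArg (fun x => b.repr x k) h
    simp only [nzc_repr_smul, Module.Basis.repr_self, Finsupp.single_eq_same] at h2
    exact hc1 h2
  have hadj : ∀ (k : Fin n) (u : {w : W // w ≠ 0}), u ∈ K →
      k ∈ (b.repr u.1).support → (nzcGraph b).Adj u (wv k) := by
    intro k u huK hk
    refine ⟨fun h => (hwL k) (h ▸ huK), k, Finsupp.mem_support_iff.mp hk, ?_⟩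
    show b.repr (wv k).1 k ≠ 0
    rw [hwvdef]
    simp only [nzc_repr_smul, Finsupp.single_eq_same]
    exact hc0
  have hnadj : ∀ (k : Fin n) (v : {w : W // w ≠ 0}),
      k ∉ (b.repr v.1).support → ¬ (nzcGraph b).Adj v (wv k) := by
    rintro k v hk ⟨-, i, hvi, hwi⟩
    have hik : i = k := by
      by_contra hik
      apply hwi
      show b.repr (wv k).1 i = 0
      rw [hwvdef]
      simp only [nzc_repr_smul]
      exact Finsupp.single_eq_of_ne hik
    rw [hik] at hvi
    exact hk (Finsupp.mem_support_iff.mpr hvi)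
  -- K^c is locating-dominating
  have hLD : IsLocDom (nzcGraph b) Kᶜ := by
    intro u v hu hv huv
    rw [Set.notMem_compl_iff] at hu hv
    have huK : u.1 = ∑ i ∈ (b.repr u.1).support, b i := hu
    have hvK : v.1 = ∑ i ∈ (b.repr v.1).support, b i := hv
    have hST : (b.repr u.1).support ≠ (b.repr v.1).support := by
      intro h
      exact huv (Subtype.ext (by rw [huK, hvK, h]))
    refine ⟨?_, ?_, ?_⟩
    · obtain ⟨k, hk⟩ := nzc_supp_nonempty b u
      exact Set.nonempty_iff_ne_empty.mp ⟨wv k, hadj k u hu hk, hwL k⟩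
    · obtain ⟨k, hk⟩ : ∃ k, (k ∈ (b.repr u.1).support ∧ k ∉ (b.repr v.1).support) ∨
          (k ∈ (b.repr v.1).support ∧ k ∉ (b.repr u.1).support) := by
        by_contra h
        push_neg at h
        exact hST (Finset.ext fun k => ⟨(h k).1, (h k).2⟩)
      rcases hk with ⟨hk1, hk2⟩ | ⟨hk1, hk2⟩
      · intro h
        have hmem : wv k ∈ (nzcGraph b).neighborSet u ∩ Kᶜ := ⟨hadj k u hu hk1, hwL k⟩
        rw [h] at hmem
        exact hnadj k v hk2 hmem.1
      · intro h
        have hmem : wv k ∈ (nzcGraph b).neighborSet v ∩ Kᶜ := ⟨hadj k v hv hk1, hwL k⟩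
        rw [← h] at hmem
        exact hnadj k u hk2 hmem.1
    · obtain ⟨k, hk⟩ := nzc_supp_nonempty b v
      exact Set.nonempty_iff_ne_empty.mp ⟨wv k, hadj k v hv hk, hwL k⟩
  -- cardinality of K^c
  have hKc : Kᶜ.ncard = q ^ n - 2 ^ n := by
    set f : {S : Finset (Fin n) // S.Nonempty} → {w : W // w ≠ 0} :=
      fun S => ⟨∑ i ∈ S.1, b i, nzc_sum_ne_zero b S.2⟩ with hfdef
    have hinj : Function.Injective f := by
      intro S T h
      have h2 := congrArg (fun v => (b.repr v.1).support) h
      simp only [hfdef, nzc_support_sum] at h2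
      exact Subtype.ext h2
    have hK : K = Set.range f := by
      ext v
      constructor
      · intro hv
        exact ⟨⟨(b.repr v.1).support, nzc_supp_nonempty b v⟩, Subtype.ext (hv : _).symm⟩
      · rintro ⟨S, rfl⟩
        show (f S).1 = ∑ i ∈ (b.repr (f S).1).support, b i
        simp only [hfdef, nzc_support_sum]
    have hKcard : K.ncard = 2 ^ n - 1 := by
      rw [hK, ← Nat.card_coe_set_eq, Nat.card_range_of_injective hinj, nzc_cardNe]
    have hcompl := Set.ncard_add_ncard_compl K
    rw [hKcard, cardV] at hcompl
    omega
  -- lower bound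
  have lower : ∀ L : Set {w : W // w ≠ 0}, IsLocDom (nzcGraph b) L →
      q ^ n - 2 ^ n ≤ L.ncard := by
    intro L hL
    set g : {w : W // w ≠ 0} → {S : Finset (Fin n) // S.Nonempty} :=
      fun v => ⟨(b.repr v.1).support, nzc_supp_nonempty b v⟩ with hgdef
    have hinjOn : Set.InjOn g Lᶜ := by
      intro u hu v hv h
      by_contra hne
      have hsupp : (b.repr u.1).support = (b.repr v.1).support := congrArg Subtype.val h
      obtain ⟨-, h2, -⟩ := hL (Set.notMem_of_mem_compl hu) (Set.notMem_of_mem_compl hv) hne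
      apply h2
      ext x
      simp only [Set.mem_inter_iff, SimpleGraph.mem_neighborSet, nzc_adj_iff]
      constructor
      · rintro ⟨⟨hxu, i, hui, hxi⟩, hxL⟩
        refine ⟨⟨fun hvx => hv (hvx ▸ hxL), i, ?_, hxi⟩, hxL⟩
        exact Finsupp.mem_support_iff.mp (hsupp ▸ Finsupp.mem_support_iff.mpr hui)
      · rintro ⟨⟨hxv, i, hvi, hxi⟩, hxL⟩
        refine ⟨⟨fun hux => hu (hux ▸ hxL), i, ?_, hxi⟩, hxL⟩
        exact Finsupp.mem_support_iff.mp (hsupp.symm ▸ Finsupp.mem_support_iff.mpr hvi)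
    have hle : Lᶜ.ncard ≤ 2 ^ n - 1 := by
      calc Lᶜ.ncard = (g '' Lᶜ).ncard := (Set.ncard_image_of_injOn hinjOn).symm
        _ ≤ (Set.univ : Set {S : Finset (Fin n) // S.Nonempty}).ncard :=
            Set.ncard_le_ncard (Set.subset_univ _) Set.finite_univ
        _ = 2 ^ n - 1 := by rw [Set.ncard_univ, nzc_cardNe]
    have hc := Set.ncard_add_ncard_compl L
    rw [cardV] at hc
    omega
  -- compute locDomNum
  have hmem : q ^ n - 2 ^ n ∈
      {k : ℕ | ∃ L : Set {w : W // w ≠ 0}, IsLocDom (nzcGraph b) L ∧ L.ncard = k} :=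
    ⟨Kᶜ, hLD, hKc⟩
  have hne : {k : ℕ | ∃ L : Set {w : W // w ≠ 0},
      IsLocDom (nzcGraph b) L ∧ L.ncard = k}.Nonempty := ⟨_, hmem⟩
  have hmain : locDomNum (nzcGraph b) = q ^ n - 2 ^ n := by
    refine le_antisymm (Nat.sInf_le hmem) ?_
    obtain ⟨L₀, hL₀, hcard⟩ := Nat.sInf_mem hne
    rw [locDomNum, ← hcard]
    exact lower L₀ hL₀
  -- the binomial identity
  have binom : ∀ a : ℕ, (∑ i ∈ Finset.Icc 1 n, n.choose i * a ^ i) + 1 = (a + 1) ^ n := by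
    intro a
    have hp : (a + 1) ^ n = ∑ i ∈ Finset.range (n + 1), a ^ i * 1 ^ (n - i) * n.choose i :=
      add_pow a 1 n
    simp only [one_pow, mul_one] at hp
    have herase : Finset.Icc 1 n = (Finset.range (n + 1)).erase 0 := by
      ext x
      simp only [Finset.mem_Icc, Finset.mem_erase, Finset.mem_range]
      omega
    have hsplit : (a ^ 0 * n.choose 0) + ∑ i ∈ (Finset.range (n + 1)).erase 0,
        a ^ i * n.choose i = ∑ i ∈ Finset.range (n + 1), a ^ i * n.choose i :=
      Finset.add_sum_erase _ (fun i => a ^ i * n.choose i) (Finset.mem_range.mpr n.succ_pos)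
    simp only [pow_zero, Nat.choose_zero_right, one_mul, mul_one] at hsplit
    rw [hp, ← hsplit, herase]
    rw [Finset.sum_congr rfl fun i _ => mul_comm (n.choose i) (a ^ i)]
    omega
  have hb1 : (∑ i ∈ Finset.Icc 1 n, n.choose i * (q - 1) ^ i) + 1 = q ^ n := by
    have := binom (q - 1)
    have hq1 : q - 1 + 1 = q := by omega
    rwa [hq1] at this
  have hb2 : (∑ i ∈ Finset.Icc 1 n, n.choose i) + 1 = 2 ^ n := by
    have h := binom 1
    norm_num at h
    exact h
  have hterm : ∀ i ∈ Finset.Icc 1 n,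
      n.choose i * ((q - 1) ^ i - 1) + n.choose i = n.choose i * (q - 1) ^ i := by
    intro i _
    have h1 : 1 ≤ (q - 1) ^ i := Nat.one_le_pow _ _ (by omega)
    conv_rhs => rw [← Nat.sub_add_cancel h1]
    rw [mul_add, mul_one]
  have hsum : (∑ i ∈ Finset.Icc 1 n, n.choose i * ((q - 1) ^ i - 1)) +
      (∑ i ∈ Finset.Icc 1 n, n.choose i) = ∑ i ∈ Finset.Icc 1 n, n.choose i * (q - 1) ^ i := by
    rw [← Finset.sum_add_distrib]
    exact Finset.sum_congr rfl hterm
  rw [hmain]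
  omega
end
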